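/- If ψ: ℝ^d → ℂ is a continuous negative definite function (Lévy exponent) with ψ(0)=0, and φ: ℝ^d → ℂ is the characteristic function of a probability measure μ on ℝ^d, and ψ(ξ)·φ(ξ) = 0 for all ξ ∈ ℝ^d, then ψ(ξ) = 0 for all ξ ∈ ℝ^d. -/

import Mathlib

/-!
Since `φ` is continuous with `φ 0 = 1`, the identity `ψ φ = 0` forces `ψ` to vanish near `0`.
There the real part `⟪ξ, Q ξ⟫ / 2 + ∫ (1 - cos ⟪ξ, y⟫) dN` of the Lévy–Khintchine formula is a
sum of nonnegative terms, so `⟪ξ, Q ξ⟫ = 0` and `cos ⟪ξ, y⟫ = 1` for `N`-a.e. `y`. Testing the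
latter along a sequence of small multiples of each basis vector shows that `N` is carried by
`{0}`, hence `N = 0`. What remains, `-i ⟪ℓ, ξ⟫ + ⟪ξ, Q ξ⟫ / 2`, has homogeneous real and imaginary
parts, so vanishing near `0` means vanishing everywhere.
-/

open MeasureTheory Complex

/-- A Lévy exponent on `ℝ^d`: a function of Lévy–Khintchine form with drift `ℓ`,
positive semidefinite `Q` and Lévy measure `N`. -/
def IsLevyExponent {d : ℕ} (ψ : EuclideanSpace ℝ (Fin d) → ℂ) : Prop :=
  ∃ (ℓ : EuclideanSpace ℝ (Fin d))
    (Q : EuclideanSpace ℝ (Fin d) →L[ℝ] EuclideanSpace ℝ (Fin d))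
    (N : Measure (EuclideanSpace ℝ (Fin d))),
    (∀ ξ, 0 ≤ (inner ℝ ξ (Q ξ) : ℝ)) ∧ N {0} = 0 ∧
    Integrable (fun y => min 1 (‖y‖ ^ 2)) N ∧
    ∀ ξ, ψ ξ = -Complex.I * ((inner ℝ ℓ ξ : ℝ) : ℂ)
        + (1 / 2 : ℂ) * ((inner ℝ ξ (Q ξ) : ℝ) : ℂ)
        - ∫ y, (Complex.exp (Complex.I * ((inner ℝ ξ y : ℝ) : ℂ)) - 1
            - Complex.I * ((inner ℝ ξ y : ℝ) : ℂ) * (if ‖y‖ < 1 then (1 : ℂ) else 0)) ∂N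

open Filter Topology RealInnerProductSpace

theorem norm_exp_I_mul_ofReal_sub_one_sub_le (θ : ℝ) :
    ‖exp (I * θ) - 1 - I * θ‖ ≤ 2 * θ ^ 2 := by
  have hIθ : ‖I * (θ : ℂ)‖ = |θ| := by simp
  rcases le_or_gt |θ| 1 with hθ | hθ
  · calc ‖exp (I * θ) - 1 - I * θ‖ ≤ ‖I * (θ : ℂ)‖ ^ 2 :=
          norm_exp_sub_one_sub_id_le (hIθ ▸ hθ)
      _ ≤ 2 * θ ^ 2 := by rw [hIθ, sq_abs]; nlinarith [sq_nonneg θ]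
  · calc ‖exp (I * θ) - 1 - I * θ‖ ≤ ‖exp (I * θ) - 1‖ + ‖I * (θ : ℂ)‖ := norm_sub_le _ _
      _ ≤ |θ| + |θ| := by
          rw [hIθ]; gcongr; exact Real.norm_eq_abs θ ▸ Real.norm_exp_I_mul_ofReal_sub_one_le
      _ ≤ 2 * θ ^ 2 := by rw [← sq_abs θ]; nlinarith

theorem eq_zero_of_forall_cos_mul_eq_one {t : ℕ → ℝ} (ht : Tendsto t atTop (𝓝 0))
    (ht0 : ∀ n, t n ≠ 0) {a : ℝ} (h : ∀ n, Real.cos (t n * a) = 1) : a = 0 := by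
  have hta : Tendsto (fun n => t n * a) atTop (𝓝 0) := by simpa using ht.mul_const a
  obtain ⟨n, hn_lo, hn_hi⟩ := (hta.eventually
    (Ioo_mem_nhds (neg_neg_iff_pos.2 Real.two_pi_pos) Real.two_pi_pos)).exists
  exact (mul_eq_zero.1 ((Real.cos_eq_one_iff_of_lt_of_lt hn_lo hn_hi).1 (h n))).resolve_left
    (ht0 n)

theorem forall_eq_zero_of_eventually_eq_zero_of_smul {E F : Type*} [TopologicalSpace E]
    [AddCommGroup E] [Module ℝ E] [ContinuousSMul ℝ E] [Zero F] {f : E → F}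
    (h0 : ∀ᶠ ξ in 𝓝 0, f ξ = 0) (hsmul : ∀ (c : ℝ) (ξ : E), c ≠ 0 → f (c • ξ) = 0 → f ξ = 0)
    (ξ : E) : f ξ = 0 := by
  have hlim : Tendsto (fun c : ℝ => c • ξ) (𝓝[≠] 0) (𝓝 0) :=
    tendsto_nhdsWithin_of_tendsto_nhds
      ((continuous_id.smul continuous_const).tendsto' 0 0 (zero_smul ℝ ξ))
  obtain ⟨c, hcξ, hc⟩ := ((hlim.eventually h0).and self_mem_nhdsWithin).exists
  exact hsmul c ξ hc hcξ

section LevyKhintchine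

variable {E : Type*} [NormedAddCommGroup E] [InnerProductSpace ℝ E]

noncomputable def levyKhintchineIntegrand (ξ y : E) : ℂ :=
  exp (I * (⟪ξ, y⟫ : ℂ)) - 1 - I * (⟪ξ, y⟫ : ℂ) * if ‖y‖ < 1 then 1 else 0

theorem levyKhintchineIntegrand_re (ξ y : E) :
    (levyKhintchineIntegrand ξ y).re = Real.cos ⟪ξ, y⟫ - 1 := by
  rw [levyKhintchineIntegrand, mul_comm I]
  split_ifs <;> simp [exp_ofReal_mul_I_re]

theorem norm_levyKhintchineIntegrand_le (ξ y : E) :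
    ‖levyKhintchineIntegrand ξ y‖ ≤ 2 * (‖ξ‖ ^ 2 + 1) * min 1 (‖y‖ ^ 2) := by
  rw [levyKhintchineIntegrand]
  split_ifs with hy
  · have hinner : ⟪ξ, y⟫ ^ 2 ≤ ‖ξ‖ ^ 2 * ‖y‖ ^ 2 := by
      rw [← mul_pow, ← sq_abs]
      exact pow_le_pow_left₀ (abs_nonneg _) (abs_real_inner_le_norm ξ y) 2
    rw [mul_one, min_eq_right (pow_le_one₀ (norm_nonneg y) hy.le)]
    calc _ ≤ 2 * ⟪ξ, y⟫ ^ 2 := norm_exp_I_mul_ofReal_sub_one_sub_le _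
      _ ≤ 2 * (‖ξ‖ ^ 2 + 1) * ‖y‖ ^ 2 := by nlinarith [sq_nonneg ‖y‖]
  · rw [mul_zero, sub_zero, min_eq_left (one_le_pow₀ (not_lt.1 hy))]
    calc _ ≤ ‖exp (I * (⟪ξ, y⟫ : ℂ))‖ + ‖(1 : ℂ)‖ := norm_sub_le _ _
      _ ≤ 2 * (‖ξ‖ ^ 2 + 1) * 1 := by
          rw [norm_exp_I_mul_ofReal, norm_one]; nlinarith [sq_nonneg ‖ξ‖]

variable [MeasurableSpace E] {N : Measure E}

noncomputable def levyKhintchineExponent (ℓ : E) (Q : E →L[ℝ] E) (N : Measure E) (ξ : E) : ℂ :=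
  -I * (⟪ℓ, ξ⟫ : ℂ) + (1 / 2 : ℂ) * (⟪ξ, Q ξ⟫ : ℂ) - ∫ y, levyKhintchineIntegrand ξ y ∂N

theorem levyKhintchineExponent_zero_measure_re (ℓ : E) (Q : E →L[ℝ] E) (ξ : E) :
    (levyKhintchineExponent ℓ Q 0 ξ).re = ⟪ξ, Q ξ⟫ / 2 := by
  simp [levyKhintchineExponent, div_eq_inv_mul]

theorem levyKhintchineExponent_zero_measure_im (ℓ : E) (Q : E →L[ℝ] E) (ξ : E) :
    (levyKhintchineExponent ℓ Q 0 ξ).im = -⟪ℓ, ξ⟫ := by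
  simp [levyKhintchineExponent]

theorem Measure.eq_zero_of_eventually_ae_cos_inner_eq_one [FiniteDimensional ℝ E]
    (hN0 : N {0} = 0) (h : ∀ᶠ ξ in 𝓝 0, ∀ᵐ y ∂N, Real.cos ⟪ξ, y⟫ = 1) : N = 0 := by
  obtain ⟨ε, hε, hball⟩ := Metric.eventually_nhds_iff.1 h
  obtain ⟨t, -, ht_mem, ht⟩ := exists_seq_strictAnti_tendsto' hε
  let b := stdOrthonormalBasis ℝ E
  have hcos : ∀ᵐ y ∂N, ∀ i n, Real.cos (t n * ⟪b i, y⟫) = 1 := by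
    refine ae_all_iff.2 fun i => ae_all_iff.2 fun n => ?_
    have htb : dist (t n • b i) 0 < ε := by
      simp [norm_smul, b.orthonormal.1 i, abs_of_pos (ht_mem n).1, (ht_mem n).2]
    simpa [real_inner_smul_left] using hball htb
  have hfalse : ∀ᵐ y ∂N, False := by
    filter_upwards [hcos, measure_eq_zero_iff_ae_notMem.1 hN0] with y hy hy0
    refine hy0 (InnerProductSpace.ext_inner_left_basis b.toBasis fun i => ?_)
    simpa using eq_zero_of_forall_cos_mul_eq_one ht (fun n => (ht_mem n).1.ne') (hy i)
  exact ae_eq_bot.1 (eventually_false_iff_eq_bot.1 hfalse)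

variable [OpensMeasurableSpace E]

theorem integrable_levyKhintchineIntegrand (hN : Integrable (fun y => min 1 (‖y‖ ^ 2)) N)
    (ξ : E) : Integrable (levyKhintchineIntegrand ξ) N := by
  refine (hN.const_mul (2 * (‖ξ‖ ^ 2 + 1))).mono' ?_
    (Eventually.of_forall (norm_levyKhintchineIntegrand_le ξ))
  refine Measurable.aestronglyMeasurable ?_
  unfold levyKhintchineIntegrand
  have hind : Measurable fun y : E => if ‖y‖ < 1 then (1 : ℂ) else 0 :=
    Measurable.ite (measurableSet_lt measurable_norm measurable_const) measurable_const
      measurable_const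
  fun_prop

theorem integrable_one_sub_cos_inner (hN : Integrable (fun y => min 1 (‖y‖ ^ 2)) N) (ξ : E) :
    Integrable (fun y => 1 - Real.cos ⟪ξ, y⟫) N :=
  (integrable_levyKhintchineIntegrand hN ξ).re.neg.congr <| Eventually.of_forall fun y => by
    simp [levyKhintchineIntegrand_re]

theorem levyKhintchineExponent_re (ℓ : E) (Q : E →L[ℝ] E)
    (hN : Integrable (fun y => min 1 (‖y‖ ^ 2)) N) (ξ : E) :
    (levyKhintchineExponent ℓ Q N ξ).re = ⟪ξ, Q ξ⟫ / 2 + ∫ y, (1 - Real.cos ⟪ξ, y⟫) ∂N := by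
  have hre : (∫ y, levyKhintchineIntegrand ξ y ∂N).re = -∫ y, (1 - Real.cos ⟪ξ, y⟫) ∂N := by
    rw [← integral_neg, ← RCLike.re_eq_complex_re,
      ← integral_re (integrable_levyKhintchineIntegrand hN ξ)]
    simp [levyKhintchineIntegrand_re]
  simp [levyKhintchineExponent, hre, div_eq_inv_mul]

theorem inner_map_self_eq_zero_and_ae_cos_eq_one {ℓ : E} {Q : E →L[ℝ] E} {ξ : E}
    (hQ : 0 ≤ ⟪ξ, Q ξ⟫) (hN : Integrable (fun y => min 1 (‖y‖ ^ 2)) N)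
    (hξ : levyKhintchineExponent ℓ Q N ξ = 0) :
    ⟪ξ, Q ξ⟫ = 0 ∧ ∀ᵐ y ∂N, Real.cos ⟪ξ, y⟫ = 1 := by
  have hsum := levyKhintchineExponent_re ℓ Q hN ξ
  rw [hξ, zero_re] at hsum
  have hcos_nonneg : 0 ≤ fun y => 1 - Real.cos ⟪ξ, y⟫ := fun y => sub_nonneg.2 (Real.cos_le_one _)
  have hint_nonneg := integral_nonneg hcos_nonneg (μ := N)
  have hint_zero : ∫ y, (1 - Real.cos ⟪ξ, y⟫) ∂N = 0 := by linarith
  refine ⟨by linarith, ?_⟩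
  filter_upwards [(integral_eq_zero_iff_of_nonneg hcos_nonneg
    (integrable_one_sub_cos_inner hN ξ)).1 hint_zero] with y hy
  simp only [Pi.zero_apply] at hy
  linarith

theorem levyKhintchineExponent_eq_zero_of_eventually_eq_zero [FiniteDimensional ℝ E] {ℓ : E}
    {Q : E →L[ℝ] E} (hQ : ∀ ξ, 0 ≤ ⟪ξ, Q ξ⟫) (hN0 : N {0} = 0)
    (hN : Integrable (fun y => min 1 (‖y‖ ^ 2)) N)
    (h : ∀ᶠ ξ in 𝓝 0, levyKhintchineExponent ℓ Q N ξ = 0) (ξ : E) :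
    levyKhintchineExponent ℓ Q N ξ = 0 := by
  obtain rfl : N = 0 := Measure.eq_zero_of_eventually_ae_cos_inner_eq_one hN0 <|
    h.mono fun ξ hξ => (inner_map_self_eq_zero_and_ae_cos_eq_one (hQ ξ) hN hξ).2
  refine forall_eq_zero_of_eventually_eq_zero_of_smul h (fun c ξ hc hcξ => ext ?_ ?_) ξ
  · have hre := congrArg re hcξ
    rw [levyKhintchineExponent_zero_measure_re, map_smul, real_inner_smul_left,
      real_inner_smul_right] at hre
    simpa [levyKhintchineExponent_zero_measure_re, hc] using hre
  · have him := congrArg im hcξ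
    rw [levyKhintchineExponent_zero_measure_im, real_inner_smul_right] at him
    simpa [levyKhintchineExponent_zero_measure_im, hc] using him

end LevyKhintchine

theorem charFun_eventually_ne_zero {E : Type*} [NormedAddCommGroup E] [InnerProductSpace ℝ E]
    [MeasurableSpace E] [BorelSpace E] [SecondCountableTopology E] (μ : Measure E)
    [IsProbabilityMeasure μ] : ∀ᶠ t in 𝓝 0, charFun μ t ≠ 0 :=
  continuous_charFun.continuousAt.eventually_ne (by simp [charFun_zero])

theorem IsLevyExponent.eq_zero_of_eventually_eq_zero {d : ℕ} {ψ : EuclideanSpace ℝ (Fin d) → ℂ}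
    (hψ : IsLevyExponent ψ) (h : ∀ᶠ ξ in 𝓝 0, ψ ξ = 0) (ξ : EuclideanSpace ℝ (Fin d)) :
    ψ ξ = 0 := by
  obtain ⟨ℓ, Q, N, hQ, hN0, hN, hψ_eq⟩ := hψ
  obtain rfl : ψ = levyKhintchineExponent ℓ Q N := funext hψ_eq
  exact levyKhintchineExponent_eq_zero_of_eventually_eq_zero hQ hN0 hN h ξ

theorem levy_exponent_zero_of_mul_charFun_zero_general {d : ℕ}
    (ψ φ : EuclideanSpace ℝ (Fin d) → ℂ)
    (hψ : IsLevyExponent ψ)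
    (μ : Measure (EuclideanSpace ℝ (Fin d))) [IsProbabilityMeasure μ]
    (hφ : ∀ ξ, φ ξ = ∫ x, Complex.exp (Complex.I * ((inner ℝ x ξ : ℝ) : ℂ)) ∂μ)
    (h : ∀ ξ, ψ ξ * φ ξ = 0) :
    ∀ ξ, ψ ξ = 0 := by
  have hφ_eq : φ = charFun μ := funext fun ξ => by simp_rw [hφ, charFun_apply, mul_comm]
  refine hψ.eq_zero_of_eventually_eq_zero ?_
  filter_upwards [hφ_eq ▸ charFun_eventually_ne_zero μ] with ξ hξ
  exact (mul_eq_zero.1 (h ξ)).resolve_right hξ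

/-- If `ψ` is a continuous Lévy exponent with `ψ 0 = 0` and `φ` is the characteristic
function of a probability measure `μ` with `ψ ξ * φ ξ = 0` for all `ξ`, then `ψ ≡ 0`. -/
theorem levy_exponent_zero_of_mul_charFun_zero {d : ℕ}
    (ψ φ : EuclideanSpace ℝ (Fin d) → ℂ)
    (hψ : IsLevyExponent ψ) (hψcont : Continuous ψ) (hψ0 : ψ 0 = 0)
    (μ : Measure (EuclideanSpace ℝ (Fin d))) [IsProbabilityMeasure μ]
    (hφ : ∀ ξ, φ ξ = ∫ x, Complex.exp (Complex.I * ((inner ℝ x ξ : ℝ) : ℂ)) ∂μ)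
    (h : ∀ ξ, ψ ξ * φ ξ = 0) :
    ∀ ξ, ψ ξ = 0 :=
  levy_exponent_zero_of_mul_charFun_zero_general ψ φ hψ μ hφ h
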